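/- Let x be an adequate homogeneous state and X an enhancement in which each B-zone contains at most one 1-labeled circle. Then for every enhanced state Y of the diagram D, the coefficient sum ε(π_{[X]_B}(dY)) lies in 2R, where π_{[X]_B} is projection onto the span of the B-equivalence class of X and ε is the augmentation sending every enhanced state to 1. -/

import Mathlib

attribute [local instance] Classical.propDecidable

/-- The local datum of the Khovanov differential at a crossing: changing an A-smoothing
to a B-smoothing either merges two circles `i ≠ j` of the source state (via the
relabeling `f`) or splits one circle into two circles `i ≠ j` of the target state
(via the relabeling `g`). -/
inductive KTrans (m n : ℕ) : Type
  | merge (f : Fin m → Fin n) (i j : Fin m) (hij : i ≠ j) (hf : f i = f j)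
  | split (g : Fin n → Fin m) (i j : Fin n) (hij : i ≠ j) (hg : g i = g j)

/-- The merge/split maps of the Frobenius algebra `R[q]/(q²)` acting on enhancements
(`true` = label 1 = `q`, `false` = label 0 = `1`):
merge: `q⊗q ↦ 0`, `1⊗q, q⊗1 ↦ q`, `1⊗1 ↦ 1`; split: `q ↦ q⊗q`, `1 ↦ q⊗1 + 1⊗q`. -/
noncomputable def ktransApply {R : Type*} [CommRing R] {m n : ℕ} :
    KTrans m n → (Fin m → Bool) → ((Fin n → Bool) →₀ R)
  | .merge f i j _ _, a =>
      if a i = true ∧ a j = true then 0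
      else Finsupp.single (fun l => decide (∃ k, f k = l ∧ a k = true)) 1
  | .split g i j _ _, a =>
      if a (g i) = true then Finsupp.single (a ∘ g) 1
      else Finsupp.single (Function.update (a ∘ g) i true) 1
        + Finsupp.single (Function.update (a ∘ g) j true) 1

/-- A combinatorial model of a link diagram for Viro-style Khovanov homology:
`c` crossings, states `s : Fin c → Bool` (`true` = A-smoothing), each state having
`circ s` circles, and for every A-smoothed crossing of every state the merge/split
transition datum to the state with that smoothing changed to B. -/
structure Diagram where
  c : ℕ
  circ : (Fin c → Bool) → ℕ
  trans : ∀ (s : Fin c → Bool) (t : Fin c), s t = true →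
    KTrans (circ s) (circ (Function.update s t false))

namespace Diagram

/-- Enhanced states: a state together with a `{0,1}`-labeling of its circles. -/
abbrev Enh (D : Diagram) : Type := Σ s : Fin D.c → Bool, Fin (D.circ s) → Bool

variable {R : Type*} [CommRing R]

/-- The Khovanov differential of an enhanced state:
`d X = ∑_t (-1)^{|A|_X^t} d_{c^t} X`, where `|A|_X^t` counts A-smoothings at crossings
of smaller index and `d_{c^t}` is the merge/split map (zero at B-smoothings). -/
noncomputable def dE (D : Diagram) (X : D.Enh) : D.Enh →₀ R :=
  ∑ t : Fin D.c,
    if h : X.1 t = true then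
      ((-1 : R) ^ (Finset.univ.filter fun r => r < t ∧ X.1 r = true).card) •
        Finsupp.mapDomain (fun b => (⟨Function.update X.1 t false, b⟩ : D.Enh))
          (ktransApply (D.trans X.1 t h) X.2)
    else 0

/-- The Khovanov differential on the chain module `C_R(D)`, the free `R`-module on
enhanced states. -/
noncomputable def d (D : Diagram) (Z : D.Enh →₀ R) : D.Enh →₀ R :=
  Z.sum fun e r => r • D.dE e

end Diagram

/-- Swap the labels on the two endpoint circles of a crossing arc. -/
def swapAt {n : ℕ} (e : Fin n × Fin n) (a : Fin n → Bool) : Fin n → Bool :=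
  Function.update (Function.update a e.1 (a e.2)) e.2 (a e.1)

/-- The equivalence relation `∼_A` (for `v = true`) resp. `∼_B` (for `v = false`) on
enhancements of a state, generated by swapping the labels on the two endpoint circles of
an arc of the corresponding type (`sm t = true` means an A-arc at crossing `t`, and
`ep t` gives the two circles the arc joins). -/
def RelLab {c n : ℕ} (sm : Fin c → Bool) (ep : Fin c → Fin n × Fin n) (v : Bool) :
    (Fin n → Bool) → (Fin n → Bool) → Prop :=
  Relation.ReflTransGen fun a b => ∃ t, sm t = v ∧ b = swapAt (ep t) a

/-- Connectivity of circles through arcs of a fixed type: `Conn sm ep true i j` says the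
circles `i`, `j` lie in the same A-zone (`v = false`: same B-zone). -/
def Conn {c n : ℕ} (sm : Fin c → Bool) (ep : Fin c → Fin n × Fin n) (v : Bool) :
    Fin n → Fin n → Prop :=
  Relation.ReflTransGen fun i j => ∃ t, sm t = v ∧ (ep t = (i, j) ∨ ep t = (j, i))

/-- Homogeneity of a state: no simple cycle of the state graph contains arcs of both
types (equivalently, every block of the state graph is all-A or all-B). -/
def Homog {c n : ℕ} (sm : Fin c → Bool) (ep : Fin c → Fin n × Fin n) : Prop :=
  ∀ (k : ℕ), 2 ≤ k → ∀ (te : ZMod k → Fin c) (ve : ZMod k → Fin n),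
    Function.Injective te → Function.Injective ve →
    (∀ i, ep (te i) = (ve i, ve (i + 1)) ∨ ep (te i) = (ve (i + 1), ve i)) →
    ∀ i j, sm (te i) = sm (te j)

/-!
Only crossings `t` that are B-smoothed in `x` can contribute, through the enhanced state `Y`
with `t` switched back to A. Since `x` is adequate, `d_{c^t}` splits a circle of `Y` into the
two distinct endpoint circles of the B-arc at `t`. Swapping labels along B-arcs keeps at most
one 1-labeled circle per B-zone, so the term `q ⊗ q` never lies in `[X]_B`. The two terms
`q ⊗ 1` and `1 ⊗ q` differ by the swap along that arc, so they lie in `[X]_B` together and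
contribute `0` or `2`.
-/

open Function

theorem update_update_eq_self {α β : Type*} [DecidableEq α] {s : α → β} {t : α} {x y : β}
    (h : s t = y) : update (update s t x) t y = s := by
  rw [update_idem, ← h, update_eq_self]

theorem swapAt_apply {n : ℕ} (e : Fin n × Fin n) (a : Fin n → Bool) (k : Fin n) :
    swapAt e a k = if k = e.2 then a e.1 else if k = e.1 then a e.2 else a k := by
  simp [swapAt, update_apply]

theorem swapAt_eq_comp {n : ℕ} (e : Fin n × Fin n) (a : Fin n → Bool) :
    swapAt e a = a ∘ Equiv.swap e.1 e.2 := by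
  funext k
  rw [swapAt_apply, comp_apply, Equiv.swap_apply_def]
  by_cases h1 : k = e.2 <;> by_cases h2 : k = e.1 <;> simp_all

theorem swapAt_swapAt {n : ℕ} (e : Fin n × Fin n) (a : Fin n → Bool) :
    swapAt e (swapAt e a) = a := by
  funext k
  simp [swapAt_eq_comp]

theorem swapAt_update_true {n : ℕ} {i j : Fin n} {c : Fin n → Bool} (hc : c i = c j) :
    swapAt (i, j) (update c i true) = update c j true := by
  funext k
  rw [swapAt_apply]
  rcases eq_or_ne k j with rfl | hj
  · simp
  rcases eq_or_ne k i with rfl | hi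
  · simp [hj, hj.symm, hc]
  simp [hi, hj]

theorem conn_swap_apply {c n : ℕ} {sm : Fin c → Bool} {ep : Fin c → Fin n × Fin n} {v : Bool}
    {t : Fin c} (ht : sm t = v) (k : Fin n) :
    Conn sm ep v k (Equiv.swap (ep t).1 (ep t).2 k) := by
  rcases eq_or_ne k (ep t).1 with rfl | h1
  · rw [Equiv.swap_apply_left]
    exact .single ⟨t, ht, Or.inl rfl⟩
  rcases eq_or_ne k (ep t).2 with rfl | h2
  · rw [Equiv.swap_apply_right]
    exact .single ⟨t, ht, Or.inr rfl⟩
  rw [Equiv.swap_apply_of_ne_of_ne h1 h2]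
  exact .refl

theorem RelLab.eq_of_conn {c n : ℕ} {sm : Fin c → Bool} {ep : Fin c → Fin n × Fin n}
    {v : Bool} {X b : Fin n → Bool}
    (hX : ∀ i j, Conn sm ep v i j → X i = true → X j = true → i = j)
    (h : RelLab sm ep v X b) :
    ∀ i j, Conn sm ep v i j → b i = true → b j = true → i = j := by
  induction h with
  | refl => exact hX
  | tail _ hstep ih =>
    obtain ⟨t, ht, rfl⟩ := hstep
    intro i j hij hi hj
    set σ := Equiv.swap (ep t).1 (ep t).2
    rw [swapAt_eq_comp] at hi hj
    have hback : Conn sm ep v (σ i) i := by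
      simpa only [σ, Equiv.swap_apply_self] using conn_swap_apply (ep := ep) ht (σ i)
    have hconn : Conn sm ep v (σ i) (σ j) := hback.trans (hij.trans (conn_swap_apply ht j))
    exact σ.injective (ih _ _ hconn hi hj)

theorem two_dvd_sum_ktransApply_split {R : Type*} [CommRing R] {m n : ℕ} {g : Fin n → Fin m}
    {i j : Fin n} (hij : i ≠ j) (hg : g i = g j) (a : Fin m → Bool) {S : Finset (Fin n → Bool)}
    (hswap : ∀ b ∈ S, swapAt (i, j) b ∈ S) (hsparse : ∀ b ∈ S, ¬(b i = true ∧ b j = true)) :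
    (2 : R) ∣ ∑ b ∈ S, ktransApply (.split g i j hij hg) a b := by
  simp only [ktransApply]
  split_ifs with ha
  · have hnot : a ∘ g ∉ S := fun hS => hsparse _ hS ⟨ha, by simpa [hg] using ha⟩
    simp [Finsupp.single_apply, hnot]
  · have hmem : update (a ∘ g) i true ∈ S ↔ update (a ∘ g) j true ∈ S := by
      have hc : (a ∘ g) i = (a ∘ g) j := congrArg a hg
      refine ⟨fun h => swapAt_update_true hc ▸ hswap _ h, fun h => ?_⟩
      rw [← swapAt_swapAt (i, j) (update (a ∘ g) i true), swapAt_update_true hc]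
      exact hswap _ h
    simp only [Finsupp.add_apply, Finsupp.single_apply, Finset.sum_add_distrib,
      Finset.sum_ite_eq, hmem]
    split_ifs
    · exact ⟨1, by ring⟩
    · exact ⟨0, by ring⟩

namespace Diagram

variable {R : Type*} [CommRing R]

noncomputable def dAt (D : Diagram) (t : Fin D.c) (X : D.Enh) : D.Enh →₀ R :=
  if h : X.1 t = true then
    ((-1 : R) ^ (Finset.univ.filter fun r => r < t ∧ X.1 r = true).card) •
      Finsupp.mapDomain (fun b => (⟨update X.1 t false, b⟩ : D.Enh))
        (ktransApply (D.trans X.1 t h) X.2)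
  else 0

theorem dE_eq_sum_dAt (D : Diagram) (X : D.Enh) : D.dE (R := R) X = ∑ t, D.dAt t X := rfl

theorem dAt_apply_of_update_ne (D : Diagram) {t : Fin D.c} {X : D.Enh} {s : Fin D.c → Bool}
    (hs : update X.1 t false ≠ s) (b : Fin (D.circ s) → Bool) :
    D.dAt (R := R) t X ⟨s, b⟩ = 0 := by
  unfold dAt
  split_ifs
  · rw [Finsupp.smul_apply, Finsupp.mapDomain_of_notMem_range, smul_zero]
    rintro ⟨_, hx⟩
    exact hs (congrArg Sigma.fst hx)
  · rfl

theorem mapDomain_sigma_mk_apply_cast (D : Diagram) {s s' : Fin D.c → Bool} (e : s = s')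
    {m : ℕ} (T : KTrans m (D.circ s)) (a : Fin m → Bool) (b : Fin (D.circ s') → Bool) :
    Finsupp.mapDomain (fun b' => (⟨s, b'⟩ : D.Enh)) (ktransApply (R := R) T a) ⟨s', b⟩ =
      ktransApply (cast (congrArg (fun s => KTrans m (D.circ s)) e) T) a b := by
  subst e
  exact Finsupp.mapDomain_apply sigma_mk_injective _ _

/-- `D.trans` lands in `D.circ (update (update s t true) t false)`, which equals `D.circ s`
only propositionally. -/
def transInto (D : Diagram) (s : Fin D.c → Bool) (t : Fin D.c) (h : s t = false) :
    KTrans (D.circ (update s t true)) (D.circ s) :=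
  cast (congrArg (fun s' => KTrans (D.circ (update s t true)) (D.circ s'))
      (update_update_eq_self h))
    (D.trans (update s t true) t (by simp))

theorem dAt_update_apply (D : Diagram) {s : Fin D.c → Bool} {t : Fin D.c} (h : s t = false)
    (a : Fin (D.circ (update s t true)) → Bool) (b : Fin (D.circ s) → Bool) :
    D.dAt (R := R) t ⟨update s t true, a⟩ ⟨s, b⟩ =
      (-1 : R) ^ (Finset.univ.filter fun r => r < t ∧ update s t true r = true).card *
        ktransApply (D.transInto s t h) a b := by
  rw [dAt, dif_pos (by simp), Finsupp.smul_apply, smul_eq_mul,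
    mapDomain_sigma_mk_apply_cast D (update_update_eq_self h)]
  rfl

theorem two_dvd_sum_dAt_apply {D : Diagram} {s0 : Fin D.c → Bool}
    {ep : Fin D.c → Fin (D.circ s0) × Fin (D.circ s0)}
    (hsplit : ∀ t (h : s0 t = false), ∃ g hne hg,
      D.transInto s0 t h = KTrans.split g (ep t).1 (ep t).2 hne hg)
    {S : Finset (Fin (D.circ s0) → Bool)}
    (hswap : ∀ t, s0 t = false → ∀ b ∈ S, swapAt (ep t) b ∈ S)
    (hsparse : ∀ b ∈ S, ∀ i j, Conn s0 ep false i j → b i = true → b j = true → i = j)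
    (Y : D.Enh) (t : Fin D.c) :
    (2 : R) ∣ ∑ b ∈ S, D.dAt t Y ⟨s0, b⟩ := by
  obtain ⟨y, a⟩ := Y
  by_cases hy : y t = true
  swap
  · simp [dAt, hy]
  by_cases hs : update y t false = s0
  swap
  · simp [dAt_apply_of_update_ne D (X := ⟨y, a⟩) hs]
  have ht : s0 t = false := by rw [← hs, update_self]
  obtain rfl : y = update s0 t true := by
    rw [← hs, update_idem, update_eq_self_iff.mpr hy.symm]
  simp_rw [dAt_update_apply D ht, ← Finset.mul_sum]
  apply dvd_mul_of_dvd_right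
  obtain ⟨g, hne, hg, hT⟩ := hsplit t ht
  rw [hT]
  exact two_dvd_sum_ktransApply_split hne hg a (hswap t ht)
    fun b hb ⟨h1, h2⟩ => hne (hsparse b hb _ _ (.single ⟨t, ht, Or.inl rfl⟩) h1 h2)

end Diagram

/-- For an adequate homogeneous state `x` (state `s0` of the diagram `D`, each B-arc
matching the split transition into `s0`) and an enhancement `X` with at most one
1-labeled circle in each B-zone, the composite `ε ∘ π_{[X]_B} ∘ d` lands in `2R`:
for every enhanced state `Y` of `D`, the sum of the coefficients of `dY` on the
B-equivalence class of `X` lies in `2R`. -/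
theorem eps_proj_d_in_2R (R : Type*) [CommRing R] (D : Diagram) (s0 : Fin D.c → Bool)
    (ep : Fin D.c → Fin (D.circ s0) × Fin (D.circ s0))
    (hcompatB : ∀ (t : Fin D.c) (h : s0 t = false),
      ∃ g hne hg,
        cast (congrArg (fun s => KTrans (D.circ (Function.update s0 t true)) (D.circ s))
            (show Function.update (Function.update s0 t true) t false = s0 by
              rw [Function.update_idem]
              exact Function.update_eq_self_iff.mpr h.symm))
          (D.trans (Function.update s0 t true) t (by simp))
        = KTrans.split g (ep t).1 (ep t).2 hne hg)
    (X : Fin (D.circ s0) → Bool)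
    (hzoneB : ∀ i j, Conn s0 ep false i j → X i = true → X j = true → i = j)
    (Y : D.Enh) :
    ∃ r : R, (∑ b ∈ Finset.univ.filter (fun b => RelLab s0 ep false X b),
        (D.dE (R := R) Y) ⟨s0, b⟩) = 2 * r := by
  show (2 : R) ∣ _
  simp only [Diagram.dE_eq_sum_dAt, Finsupp.finsetSum_apply]
  rw [Finset.sum_comm]
  refine Finset.dvd_sum fun t _ => Diagram.two_dvd_sum_dAt_apply hcompatB ?_ ?_ Y t
  · intro t ht b hb
    simp only [Finset.mem_filter, Finset.mem_univ, true_and] at hb ⊢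
    exact hb.tail ⟨t, ht, rfl⟩
  · intro b hb
    exact RelLab.eq_of_conn hzoneB (Finset.mem_filter.mp hb).2
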